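/- In QHC, ⊢ ∇(∇α ∨ ¬∇α) → (∇α ↔ ¬¬α), where ∇α := !?α. -/

import Mathlib

/- Problem (intuitionistic) formulas and proposition (classical) formulas of QHC. -/
mutual
inductive PF : Type
  | var : Nat → PF
  | bot : PF
  | and : PF → PF → PF
  | or : PF → PF → PF
  | imp : PF → PF → PF
  | bang : CF → PF
inductive CF : Type
  | var : Nat → CF
  | fls : CF
  | and : CF → CF → CF
  | or : CF → CF → CF
  | imp : CF → CF → CF
  | quest : PF → CF
end

def PF.neg (α : PF) : PF := α.imp PF.bot
def CF.neg (p : CF) : CF := p.imp CF.fls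
def PF.iff (α β : PF) : PF := (α.imp β).and (β.imp α)
def CF.iff (p q : CF) : CF := (p.imp q).and (q.imp p)
def CF.box (p : CF) : CF := CF.quest (PF.bang p)
def PF.nabla (α : PF) : PF := PF.bang (CF.quest α)

/- Derivability in QHC, parameterized by a set `Ax` of extra problem axioms
(used to treat the axiom ¬!0 and its variants uniformly). Intuitionistic logic
on problems, classical logic on propositions, the rules α ⊢ ?α and p ⊢ !p, and
the mixed axioms ?!p → p, α → !?α, !(p→q) → (!p → !q), ?(α→β) → (?α → ?β). -/
mutual
inductive ProvP (Ax : PF → Prop) : PF → Prop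
  | axm {α} : Ax α → ProvP Ax α
  | mp {α β} : ProvP Ax (α.imp β) → ProvP Ax α → ProvP Ax β
  | ak (α β : PF) : ProvP Ax (α.imp (β.imp α))
  | as (α β γ : PF) : ProvP Ax ((α.imp (β.imp γ)).imp ((α.imp β).imp (α.imp γ)))
  | andI (α β : PF) : ProvP Ax (α.imp (β.imp (α.and β)))
  | andE1 (α β : PF) : ProvP Ax ((α.and β).imp α)
  | andE2 (α β : PF) : ProvP Ax ((α.and β).imp β)
  | orI1 (α β : PF) : ProvP Ax (α.imp (α.or β))
  | orI2 (α β : PF) : ProvP Ax (β.imp (α.or β))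
  | orE (α β γ : PF) : ProvP Ax ((α.imp γ).imp ((β.imp γ).imp ((α.or β).imp γ)))
  | exf (α : PF) : ProvP Ax (PF.bot.imp α)
  | bangIntro {p} : ProvC Ax p → ProvP Ax (PF.bang p)
  | bangImp (p q : CF) : ProvP Ax ((PF.bang (p.imp q)).imp ((PF.bang p).imp (PF.bang q)))
  | bangQuest (α : PF) : ProvP Ax (α.imp (PF.bang (CF.quest α)))
inductive ProvC (Ax : PF → Prop) : CF → Prop
  | mp {p q} : ProvC Ax (p.imp q) → ProvC Ax p → ProvC Ax q
  | ak (p q : CF) : ProvC Ax (p.imp (q.imp p))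
  | as (p q r : CF) : ProvC Ax ((p.imp (q.imp r)).imp ((p.imp q).imp (p.imp r)))
  | andI (p q : CF) : ProvC Ax (p.imp (q.imp (p.and q)))
  | andE1 (p q : CF) : ProvC Ax ((p.and q).imp p)
  | andE2 (p q : CF) : ProvC Ax ((p.and q).imp q)
  | orI1 (p q : CF) : ProvC Ax (p.imp (p.or q))
  | orI2 (p q : CF) : ProvC Ax (q.imp (p.or q))
  | orE (p q r : CF) : ProvC Ax ((p.imp r).imp ((q.imp r).imp ((p.or q).imp r)))
  | exf (p : CF) : ProvC Ax (CF.fls.imp p)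
  | lem (p : CF) : ProvC Ax (p.or (p.imp CF.fls))
  | questIntro {α} : ProvP Ax α → ProvC Ax (CF.quest α)
  | questImp (α β : PF) : ProvC Ax ((CF.quest (α.imp β)).imp ((CF.quest α).imp (CF.quest β)))
  | questBang (p : CF) : ProvC Ax ((CF.quest (PF.bang p)).imp p)
end

/-- The axiom (!⊥): ¬!0. -/
def QHCAx : PF → Prop := fun α => α = (PF.bang CF.fls).imp PF.bot

/-- Derivability of a problem in QHC. -/
def PrvP (α : PF) : Prop := ProvP QHCAx α
/-- Derivability of a proposition in QHC. -/
def PrvC (p : CF) : Prop := ProvC QHCAx p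


/-!
Both directions are pushed through the normal modality `∇ = !?`.
For `∇α → ¬¬α`: from `¬α` we get `∇¬α`, hence `∇α → ∇⊥`, and `∇⊥ = !?⊥` implies `!0`
(because `?⊥ → ?!0 → 0`), which the axiom `¬!0` refutes.
For `¬¬α → ∇α`: the intuitionistic tautology `(β ∨ ¬β) → ¬¬β → β` with `β = ∇α`,
pushed through `∇`, turns the hypothesis into `∇¬¬∇α → ∇∇α`; moreover
`¬¬α → ¬¬∇α → ∇¬¬∇α` since `α → ∇α`, and `∇∇α → ∇α` by `?!p → p`.
-/

/-- Hypotheses are discharged innermost first, so that `(δ :: Γ).impFold α` is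
definitionally `Γ.impFold (δ.imp α)`. -/
def PF.impFold : List PF → PF → PF
  | [], α => α
  | δ :: Γ, α => PF.impFold Γ (δ.imp α)

/-- `ProvP` itself has no hypotheses, since the necessitation rules `α ⊢ ?α` and `p ⊢ !p`
do not survive the deduction theorem; a context is simulated by curried implications. -/
def Entails (Ax : PF → Prop) (Γ : List PF) (α : PF) : Prop :=
  ProvP Ax (PF.impFold Γ α)

section

variable {Ax : PF → Prop}

theorem ProvP.imp_self (α : PF) : ProvP Ax (α.imp α) :=
  ((as α (α.imp α) α).mp (ak α (α.imp α))).mp (ak α α)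

theorem ProvC.imp_trans {p q r : CF} (h₁ : ProvC Ax (p.imp q)) (h₂ : ProvC Ax (q.imp r)) :
    ProvC Ax (p.imp r) :=
  ((as p q r).mp ((ak (q.imp r) p).mp h₂)).mp h₁

theorem ProvC.quest_bot_imp_fls : ProvC Ax ((CF.quest PF.bot).imp CF.fls) :=
  imp_trans ((questImp _ (PF.bang CF.fls)).mp (questIntro (ProvP.exf _))) (questBang CF.fls)

namespace Entails

theorem impI {Γ : List PF} {α β : PF} (h : Entails Ax (α :: Γ) β) :
    Entails Ax Γ (α.imp β) :=
  h

theorem thm {Γ : List PF} {α : PF} (h : ProvP Ax α) : Entails Ax Γ α := by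
  induction Γ generalizing α with
  | nil => exact h
  | cons δ Γ ih => exact ih ((ProvP.ak α δ).mp h)

theorem mp {Γ : List PF} {α β : PF} (h₁ : Entails Ax Γ (α.imp β)) (h₂ : Entails Ax Γ α) :
    Entails Ax Γ β := by
  induction Γ generalizing α β with
  | nil => exact ProvP.mp h₁ h₂
  | cons δ Γ ih => exact ih (ih (thm (ProvP.as δ α β)) h₁) h₂

theorem hyp {Γ : List PF} {α : PF} (h : α ∈ Γ) : Entails Ax Γ α := by
  induction Γ generalizing α with
  | nil => cases h
  | cons δ Γ ih =>
    show Entails Ax Γ (δ.imp α)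
    rcases List.mem_cons.mp h with rfl | h
    · exact thm (ProvP.imp_self α)
    · exact mp (thm (ProvP.ak α δ)) (ih h)

theorem iffI {Γ : List PF} {α β : PF} (h₁ : Entails Ax Γ (α.imp β))
    (h₂ : Entails Ax Γ (β.imp α)) : Entails Ax Γ (α.iff β) :=
  mp (mp (thm (ProvP.andI _ _)) h₁) h₂

end Entails

namespace ProvP

theorem imp_trans {α β γ : PF} (h₁ : ProvP Ax (α.imp β)) (h₂ : ProvP Ax (β.imp γ)) :
    ProvP Ax (α.imp γ) :=
  Entails.impI (Γ := []) <| .mp (.thm h₂) (.mp (.thm h₁) (.hyp (List.mem_singleton_self α)))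

theorem not_not_mono {α β : PF} (h : ProvP Ax (α.imp β)) :
    ProvP Ax (α.neg.neg.imp β.neg.neg) := by
  refine Entails.impI (Γ := []) (Entails.impI (Γ := [α.neg.neg]) ?_)
  have hbot : Entails Ax [α, β.neg, α.neg.neg] PF.bot :=
    .mp (.hyp (α := β.neg) (by simp)) (.mp (.thm h) (.hyp (by simp)))
  exact .mp (.hyp (α := α.neg.neg) (by simp)) hbot.impI

theorem or_not_imp_not_not_imp (β : PF) : ProvP Ax ((β.or β.neg).imp (β.neg.neg.imp β)) := by
  have hneg : Entails Ax [] (β.neg.imp (β.neg.neg.imp β)) :=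
    Entails.impI (Entails.impI (.mp (.thm (exf β)) (.mp (.hyp (α := β.neg.neg) (by simp))
      (.hyp (by simp)))))
  exact (orE _ _ _).mp (ak β _) |>.mp hneg

theorem bang_mono {p q : CF} (h : ProvC Ax (p.imp q)) :
    ProvP Ax ((PF.bang p).imp (PF.bang q)) :=
  (bangImp p q).mp (bangIntro h)

theorem nabla_mono {α β : PF} (h : ProvP Ax (α.imp β)) : ProvP Ax (α.nabla.imp β.nabla) :=
  bang_mono ((ProvC.questImp α β).mp (ProvC.questIntro h))

theorem nabla_imp (α β : PF) : ProvP Ax ((α.imp β).nabla.imp (α.nabla.imp β.nabla)) :=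
  imp_trans (bang_mono (ProvC.questImp α β)) (bangImp _ _)

theorem nabla_nabla (α : PF) : ProvP Ax (α.nabla.nabla.imp α.nabla) :=
  bang_mono (ProvC.questBang (CF.quest α))

theorem nabla_bot (hAx : Ax ((PF.bang CF.fls).imp PF.bot)) :
    ProvP Ax (PF.bot.nabla.imp PF.bot) :=
  imp_trans (bang_mono ProvC.quest_bot_imp_fls) (axm hAx)

theorem nabla_imp_not_not (hAx : Ax ((PF.bang CF.fls).imp PF.bot)) (α : PF) :
    ProvP Ax (α.nabla.imp α.neg.neg) := by
  refine Entails.impI (Γ := []) (Entails.impI (Γ := [α.nabla]) ?_)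
  have hnabla_neg : Entails Ax [α.neg, α.nabla] α.neg.nabla :=
    .mp (.thm (bangQuest _)) (.hyp (by simp))
  exact .mp (.thm (nabla_bot hAx)) (.mp (.mp (.thm (nabla_imp _ _)) hnabla_neg) (.hyp (by simp)))

theorem nabla_or_not_imp (β : PF) :
    ProvP Ax ((β.or β.neg).nabla.imp (β.neg.neg.nabla.imp β.nabla)) :=
  imp_trans (nabla_mono (or_not_imp_not_not_imp β)) (nabla_imp _ _)

theorem nabla_or_not_nabla_imp (α : PF) :
    ProvP Ax ((α.nabla.or α.nabla.neg).nabla.imp (α.neg.neg.imp α.nabla)) := by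
  refine Entails.impI (Γ := []) (Entails.impI (Γ := [(α.nabla.or α.nabla.neg).nabla]) ?_)
  have hnn : Entails Ax [α.neg.neg, (α.nabla.or α.nabla.neg).nabla] α.nabla.neg.neg.nabla :=
    .mp (.thm (bangQuest _)) (.mp (.thm (not_not_mono (bangQuest α))) (.hyp (by simp)))
  exact .mp (.thm (nabla_nabla α))
    (.mp (.mp (.thm (nabla_or_not_imp _)) (.hyp (by simp))) hnn)

end ProvP

end

theorem qhc_pushout_formula (α : PF) :
    PrvP ((PF.nabla ((PF.nabla α).or (PF.neg (PF.nabla α)))).imp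
      (PF.iff (PF.nabla α) (PF.neg (PF.neg α)))) :=
  Entails.impI (Γ := []) <| Entails.iffI (.thm (ProvP.nabla_imp_not_not (Ax := QHCAx) rfl α))
    (.mp (.thm (ProvP.nabla_or_not_nabla_imp α)) (.hyp (List.mem_singleton_self _)))
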